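/- arXiv:1501.00793 — 4 statements merged into one kernel-verified Lean document; each statement's English description precedes it below -/
import Mathlib

section
/- Let λ₁,λ₂,λ₃,λ₄ and λ̄₁,λ̄₂,λ̄₃,λ̄₄ be positive reals. Suppose A,B,C,D : [0,∞) → (0,∞) are differentiable and satisfy dA/dt = C/B + B/C - 2, dB/dt = -B²/(AC) + C/A + D/C, dC/dt = -C²/(AB) + B/A + D/B, dD/dt = -D²/(BC) with A(0)=λ₁, B(0)=λ₂, C(0)=λ₃, D(0)=λ₄, and suppose (as holds for these solutions) that B(t) → ∞ and B(t)/C(t) → 1 as t → ∞. Let Ā,B̄,C̄,D̄ satisfy the same ODE system with initial data λ̄₁,λ̄₂,λ̄₃,λ̄₄ and the same asymptotic properties. Then ((A-Ā)/A)² + ((B-B̄)/B)² + ((C-C̄)/C)² + ((D-D̄)/D)² tends to 0 as t → ∞ if and only if λ̄₂λ̄₃λ̄₄² = λ₂λ₃λ₄² and λ̄₁λ̄₄(λ̄₂+λ̄₃) = λ₁λ₄(λ₂+λ₃); in particular once λ̄₂ and λ̄₄ are prescribed, λ̄₁ and λ̄₃ are determined, so the quasi-convergence class [g]_α is exactly a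 2-parameter family. -/
/-! Along the flow `BCD²` and `AD(B+C)` are conserved and `D⁻³` is affine in `t` with slope
`3/(BCD²)`. Quasi-convergence means that each ratio `ρ_X = X̄/X` tends to `1`. Then
`ρ_B ρ_C ρ_D²` and `ρ_A ρ_D (B̄+C̄)/(B+C)`, being the (constant) ratios of the invariants, must
equal `1`. Conversely, if the invariants agree, `ρ_D³` is a ratio of affine functions with equal
slopes, so `ρ_D → 1`; since `B/C` and `B̄/C̄` tend to `1`, so does `ρ_C/ρ_B`, and the first
invariant forces `ρ_B → 1`, hence `ρ_C → 1`; the second invariant finally forces `ρ_A → 1`. -/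

open Filter Set Topology

theorem eq_of_hasDerivWithinAt_zero_Ici {f : ℝ → ℝ} {a : ℝ}
    (hf : ∀ x ∈ Ici a, HasDerivWithinAt f 0 (Ici a) x) {t : ℝ} (ht : t ∈ Ici a) :
    f t = f a :=
  constant_of_has_deriv_right_zero
    (fun x hx => (hf x hx.1).continuousWithinAt.mono Icc_subset_Ici_self)
    (fun x hx => (hf x hx.1).mono (Ici_subset_Ici.2 hx.1)) t ⟨ht, le_rfl⟩

section Limits

variable {α : Type*} {l : Filter α}

theorem tendsto_of_tendsto_pow {f : α → ℝ} {c : ℝ} {n : ℕ} (hn : n ≠ 0)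
    (hf : ∀ᶠ x in l, 0 ≤ f x) (hc : 0 ≤ c) (h : Tendsto (fun x => f x ^ n) l (𝓝 (c ^ n))) :
    Tendsto f l (𝓝 c) := by
  have h' := h.rpow_const (p := (n : ℝ)⁻¹) (Or.inr (by positivity))
  rw [Real.pow_rpow_inv_natCast hc hn] at h'
  exact h'.congr' (hf.mono fun x hx => Real.pow_rpow_inv_natCast hx hn)

theorem tendsto_sq_nhds_zero_iff {f : α → ℝ} :
    Tendsto (fun x => f x ^ 2) l (𝓝 0) ↔ Tendsto f l (𝓝 0) := by
  refine ⟨fun h => ?_, fun h => by simpa using h.pow 2⟩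
  rw [tendsto_zero_iff_abs_tendsto_zero]
  refine tendsto_of_tendsto_pow two_ne_zero (.of_forall fun x => abs_nonneg (f x)) le_rfl ?_
  simpa only [Function.comp_apply, sq_abs, zero_pow two_ne_zero] using h

theorem tendsto_add_nhds_zero_iff_of_nonneg {f g : α → ℝ} (hf : ∀ x, 0 ≤ f x)
    (hg : ∀ x, 0 ≤ g x) :
    Tendsto (fun x => f x + g x) l (𝓝 0) ↔ Tendsto f l (𝓝 0) ∧ Tendsto g l (𝓝 0) :=
  ⟨fun h => ⟨squeeze_zero hf (fun x => le_add_of_nonneg_right (hg x)) h,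
      squeeze_zero hg (fun x => le_add_of_nonneg_left (hf x)) h⟩,
    fun h => by simpa using h.1.add h.2⟩

theorem tendsto_sq_sub_div_iff {X Y : α → ℝ} (hX : ∀ᶠ x in l, X x ≠ 0) :
    Tendsto (fun x => ((X x - Y x) / X x) ^ 2) l (𝓝 0) ↔ Tendsto (fun x => Y x / X x) l (𝓝 1) := by
  rw [← tendsto_sub_nhds_zero_iff (x := (1 : ℝ)),
    ← tendsto_sq_nhds_zero_iff (f := fun x => Y x / X x - 1)]
  refine tendsto_congr' (hX.mono fun x hx => ?_)
  field_simp
  ring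

theorem tendsto_add_div_add {f g f' g' : α → ℝ} (hfg : ∀ᶠ x in l, f x ≠ 0 ∧ g x ≠ 0)
    (hf : Tendsto (fun x => f' x / f x) l (𝓝 1)) (hg : Tendsto (fun x => g' x / g x) l (𝓝 1))
    (hfg_div : Tendsto (fun x => f x / g x) l (𝓝 1)) :
    Tendsto (fun x => (f' x + g' x) / (f x + g x)) l (𝓝 1) := by
  have h : Tendsto (fun x => (f' x / f x * (f x / g x) + g' x / g x) / (f x / g x + 1)) l
      (𝓝 ((1 * 1 + 1) / (1 + 1))) :=
    ((hf.mul hfg_div).add hg).div (hfg_div.add_const 1) (by norm_num)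
  norm_num at h
  refine h.congr' (hfg.mono fun x ⟨hfx, hgx⟩ => ?_)
  field_simp

end Limits

theorem tendsto_add_mul_div_add_mul_atTop (a b c d : ℝ) (hd : d ≠ 0) :
    Tendsto (fun t => (a + c * t) / (b + d * t)) atTop (𝓝 (c / d)) := by
  have h : Tendsto (fun t => (a / t + c) / (b / t + d)) atTop (𝓝 ((0 + c) / (0 + d))) :=
    (((tendsto_const_nhds (x := a)).div_atTop tendsto_id).add_const c).div
      (((tendsto_const_nhds (x := b)).div_atTop tendsto_id).add_const d) (by simpa using hd)
  simp only [zero_add] at h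
  refine h.congr' ((eventually_gt_atTop 0).mono fun t ht => ?_)
  field_simp

structure IsA8RicciFlow (A B C D : ℝ → ℝ) : Prop where
  pos_A : ∀ t ∈ Ici (0 : ℝ), 0 < A t
  pos_B : ∀ t ∈ Ici (0 : ℝ), 0 < B t
  pos_C : ∀ t ∈ Ici (0 : ℝ), 0 < C t
  pos_D : ∀ t ∈ Ici (0 : ℝ), 0 < D t
  hasDerivWithinAt_A : ∀ t ∈ Ici (0 : ℝ),
    HasDerivWithinAt A (C t / B t + B t / C t - 2) (Ici 0) t
  hasDerivWithinAt_B : ∀ t ∈ Ici (0 : ℝ),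
    HasDerivWithinAt B (-(B t) ^ 2 / (A t * C t) + C t / A t + D t / C t) (Ici 0) t
  hasDerivWithinAt_C : ∀ t ∈ Ici (0 : ℝ),
    HasDerivWithinAt C (-(C t) ^ 2 / (A t * B t) + B t / A t + D t / B t) (Ici 0) t
  hasDerivWithinAt_D : ∀ t ∈ Ici (0 : ℝ),
    HasDerivWithinAt D (-(D t) ^ 2 / (B t * C t)) (Ici 0) t

namespace IsA8RicciFlow

variable {A B C D Ab Bb Cb Db : ℝ → ℝ} {t : ℝ}

theorem eventually_pos (F : IsA8RicciFlow A B C D) :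
    ∀ᶠ t in atTop, 0 < A t ∧ 0 < B t ∧ 0 < C t ∧ 0 < D t :=
  (eventually_ge_atTop 0).mono fun t ht => ⟨F.pos_A t ht, F.pos_B t ht, F.pos_C t ht, F.pos_D t ht⟩

theorem mul_mul_sq_eq (F : IsA8RicciFlow A B C D) (ht : t ∈ Ici 0) :
    B t * C t * D t ^ 2 = B 0 * C 0 * D 0 ^ 2 := by
  refine eq_of_hasDerivWithinAt_zero_Ici (f := fun t => B t * C t * D t ^ 2)
    (fun x hx => ?_) ht
  have := (F.pos_A x hx).ne'
  have := (F.pos_B x hx).ne'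
  have := (F.pos_C x hx).ne'
  refine (((F.hasDerivWithinAt_B x hx).mul (F.hasDerivWithinAt_C x hx)).mul
    ((F.hasDerivWithinAt_D x hx).pow 2)).congr_deriv ?_
  simp only [Pi.mul_apply, Pi.pow_apply]
  field_simp
  ring

theorem mul_mul_add_eq (F : IsA8RicciFlow A B C D) (ht : t ∈ Ici 0) :
    A t * D t * (B t + C t) = A 0 * D 0 * (B 0 + C 0) := by
  refine eq_of_hasDerivWithinAt_zero_Ici (f := fun t => A t * D t * (B t + C t))
    (fun x hx => ?_) ht
  have := (F.pos_A x hx).ne'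
  have := (F.pos_B x hx).ne'
  have := (F.pos_C x hx).ne'
  refine (((F.hasDerivWithinAt_A x hx).mul (F.hasDerivWithinAt_D x hx)).mul
    ((F.hasDerivWithinAt_B x hx).add (F.hasDerivWithinAt_C x hx))).congr_deriv ?_
  simp only [Pi.mul_apply, Pi.add_apply]
  field_simp
  ring

theorem inv_pow_three_eq (F : IsA8RicciFlow A B C D) (ht : t ∈ Ici 0) :
    (D t)⁻¹ ^ 3 = (D 0)⁻¹ ^ 3 + 3 / (B 0 * C 0 * D 0 ^ 2) * t := by
  have key : ∀ x ∈ Ici (0 : ℝ), HasDerivWithinAt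
      (fun t => (D t)⁻¹ ^ 3 - 3 / (B 0 * C 0 * D 0 ^ 2) * t) 0 (Ici 0) x := by
    intro x hx
    have := (F.pos_B x hx).ne'
    have := (F.pos_C x hx).ne'
    have hDx := (F.pos_D x hx).ne'
    refine ((((F.hasDerivWithinAt_D x hx).inv hDx).pow 3).sub
      ((hasDerivWithinAt_id x (Ici 0)).const_mul (3 / (B 0 * C 0 * D 0 ^ 2)))).congr_deriv ?_
    simp only [Pi.inv_apply, Nat.cast_ofNat, Nat.reduceSub]
    rw [← F.mul_mul_sq_eq hx]
    field_simp
    ring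
  linarith [eq_of_hasDerivWithinAt_zero_Ici key ht]

theorem mul_mul_sq_pos (F : IsA8RicciFlow A B C D) : 0 < B 0 * C 0 * D 0 ^ 2 := by
  have := F.pos_B 0 self_mem_Ici
  have := F.pos_C 0 self_mem_Ici
  have := F.pos_D 0 self_mem_Ici
  positivity

theorem mul_mul_add_pos (F : IsA8RicciFlow A B C D) : 0 < A 0 * D 0 * (B 0 + C 0) := by
  have := F.pos_A 0 self_mem_Ici
  have := F.pos_B 0 self_mem_Ici
  have := F.pos_C 0 self_mem_Ici
  have := F.pos_D 0 self_mem_Ici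
  positivity

theorem invariants_eq_of_tendsto_div (F : IsA8RicciFlow A B C D)
    (Fb : IsA8RicciFlow Ab Bb Cb Db) (hBC : Tendsto (fun t => B t / C t) atTop (𝓝 1))
    (hA : Tendsto (fun t => Ab t / A t) atTop (𝓝 1))
    (hB : Tendsto (fun t => Bb t / B t) atTop (𝓝 1))
    (hC : Tendsto (fun t => Cb t / C t) atTop (𝓝 1))
    (hD : Tendsto (fun t => Db t / D t) atTop (𝓝 1)) :
    Bb 0 * Cb 0 * Db 0 ^ 2 = B 0 * C 0 * D 0 ^ 2 ∧
      Ab 0 * Db 0 * (Bb 0 + Cb 0) = A 0 * D 0 * (B 0 + C 0) := by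
  have hK : Tendsto (fun _ : ℝ => Bb 0 * Cb 0 * Db 0 ^ 2 / (B 0 * C 0 * D 0 ^ 2))
      atTop (𝓝 1) := by
    have h := (hB.mul hC).mul (hD.pow 2)
    norm_num at h
    refine h.congr' ((eventually_ge_atTop 0).mono fun t ht => ?_)
    rw [← F.mul_mul_sq_eq ht, ← Fb.mul_mul_sq_eq ht]
    ring
  have hL : Tendsto (fun _ : ℝ => Ab 0 * Db 0 * (Bb 0 + Cb 0) / (A 0 * D 0 * (B 0 + C 0)))
      atTop (𝓝 1) := by
    have hBC_ne := F.eventually_pos.mono fun t ht => And.intro ht.2.1.ne' ht.2.2.1.ne'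
    have h := (hA.mul hD).mul (tendsto_add_div_add hBC_ne hB hC hBC)
    norm_num at h
    refine h.congr' ((eventually_ge_atTop 0).mono fun t ht => ?_)
    rw [← F.mul_mul_add_eq ht, ← Fb.mul_mul_add_eq ht, mul_div_mul_comm, mul_div_mul_comm]
  exact ⟨(div_eq_one_iff_eq F.mul_mul_sq_pos.ne').1 (tendsto_const_nhds_iff.1 hK),
    (div_eq_one_iff_eq F.mul_mul_add_pos.ne').1 (tendsto_const_nhds_iff.1 hL)⟩

theorem tendsto_div_D_of_mul_mul_sq_eq (F : IsA8RicciFlow A B C D)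
    (Fb : IsA8RicciFlow Ab Bb Cb Db) (hK : Bb 0 * Cb 0 * Db 0 ^ 2 = B 0 * C 0 * D 0 ^ 2) :
    Tendsto (fun t => Db t / D t) atTop (𝓝 1) := by
  have K_pos := F.mul_mul_sq_pos
  have h := tendsto_add_mul_div_add_mul_atTop ((D 0)⁻¹ ^ 3) ((Db 0)⁻¹ ^ 3)
    (3 / (B 0 * C 0 * D 0 ^ 2)) (3 / (B 0 * C 0 * D 0 ^ 2)) (by positivity)
  rw [div_self (by positivity), ← one_pow (M := ℝ) 3] at h
  refine tendsto_of_tendsto_pow three_ne_zero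
    ((F.eventually_pos.and Fb.eventually_pos).mono fun t ht => (div_pos ht.2.2.2.2 ht.1.2.2.2).le)
    zero_le_one (h.congr' ((eventually_ge_atTop 0).mono fun t ht => ?_))
  have := (F.pos_D t ht).ne'
  have := (Fb.pos_D t ht).ne'
  rw [← F.inv_pow_three_eq ht, ← hK, ← Fb.inv_pow_three_eq ht]
  field_simp

theorem tendsto_div_B_of_mul_mul_sq_eq (F : IsA8RicciFlow A B C D)
    (Fb : IsA8RicciFlow Ab Bb Cb Db) (hBC : Tendsto (fun t => B t / C t) atTop (𝓝 1))
    (hBCb : Tendsto (fun t => Bb t / Cb t) atTop (𝓝 1))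
    (hK : Bb 0 * Cb 0 * Db 0 ^ 2 = B 0 * C 0 * D 0 ^ 2) :
    Tendsto (fun t => Bb t / B t) atTop (𝓝 1) := by
  -- `ρ_B² ρ_D² (ρ_C/ρ_B) = ρ_B ρ_C ρ_D² = 1` and `ρ_C/ρ_B = (B/C)/(B̄/C̄)`
  have h : Tendsto (fun t => 1 / ((Db t / D t) ^ 2 * ((B t / C t) / (Bb t / Cb t)))) atTop
      (𝓝 (1 / (1 ^ 2 * (1 / 1)))) :=
    tendsto_const_nhds.div
      (((F.tendsto_div_D_of_mul_mul_sq_eq Fb hK).pow 2).mul (hBC.div hBCb one_ne_zero))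
      (by norm_num)
  rw [show (1 : ℝ) / (1 ^ 2 * (1 / 1)) = 1 ^ 2 by norm_num] at h
  refine tendsto_of_tendsto_pow two_ne_zero
    ((F.eventually_pos.and Fb.eventually_pos).mono fun t ht => (div_pos ht.2.2.1 ht.1.2.1).le)
    zero_le_one (h.congr' ((eventually_ge_atTop 0).mono fun t ht => ?_))
  have := (F.pos_B t ht).ne'
  have := (F.pos_C t ht).ne'
  have := (F.pos_D t ht).ne'
  have := (Fb.pos_B t ht).ne'
  have := (Fb.pos_C t ht).ne'
  have := (Fb.pos_D t ht).ne'
  have hKt : Bb t * Cb t * Db t ^ 2 = B t * C t * D t ^ 2 := by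
    rw [F.mul_mul_sq_eq ht, Fb.mul_mul_sq_eq ht, hK]
  field_simp
  linear_combination -hKt

theorem tendsto_div_of_invariants_eq (F : IsA8RicciFlow A B C D)
    (Fb : IsA8RicciFlow Ab Bb Cb Db) (hBC : Tendsto (fun t => B t / C t) atTop (𝓝 1))
    (hBCb : Tendsto (fun t => Bb t / Cb t) atTop (𝓝 1))
    (hK : Bb 0 * Cb 0 * Db 0 ^ 2 = B 0 * C 0 * D 0 ^ 2)
    (hL : Ab 0 * Db 0 * (Bb 0 + Cb 0) = A 0 * D 0 * (B 0 + C 0)) :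
    Tendsto (fun t => Ab t / A t) atTop (𝓝 1) ∧ Tendsto (fun t => Bb t / B t) atTop (𝓝 1) ∧
      Tendsto (fun t => Cb t / C t) atTop (𝓝 1) ∧ Tendsto (fun t => Db t / D t) atTop (𝓝 1) := by
  have hD := F.tendsto_div_D_of_mul_mul_sq_eq Fb hK
  have hB := F.tendsto_div_B_of_mul_mul_sq_eq Fb hBC hBCb hK
  have hC : Tendsto (fun t => Cb t / C t) atTop (𝓝 1) := by
    have h := hB.mul (hBC.div hBCb one_ne_zero)
    norm_num at h
    refine h.congr' ((F.eventually_pos.and Fb.eventually_pos).mono fun t ht => ?_)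
    have := ht.1.2.1.ne'
    have := ht.1.2.2.1.ne'
    have := ht.2.2.1.ne'
    have := ht.2.2.2.1.ne'
    field_simp
  have hA : Tendsto (fun t => Ab t / A t) atTop (𝓝 1) := by
    have hBC_ne := F.eventually_pos.mono fun t ht => And.intro ht.2.1.ne' ht.2.2.1.ne'
    have h : Tendsto (fun t => 1 / (Db t / D t * ((Bb t + Cb t) / (B t + C t)))) atTop
        (𝓝 (1 / (1 * 1))) :=
      tendsto_const_nhds.div (hD.mul (tendsto_add_div_add hBC_ne hB hC hBC)) (by norm_num)
    norm_num at h
    refine h.congr' ((eventually_ge_atTop 0).mono fun t ht => ?_)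
    have := (F.pos_A t ht).ne'
    have := (F.pos_D t ht).ne'
    have := (Fb.pos_D t ht).ne'
    have := (add_pos (F.pos_B t ht) (F.pos_C t ht)).ne'
    have := (add_pos (Fb.pos_B t ht) (Fb.pos_C t ht)).ne'
    have hLt : Ab t * Db t * (Bb t + Cb t) = A t * D t * (B t + C t) := by
      rw [F.mul_mul_add_eq ht, Fb.mul_mul_add_eq ht, hL]
    field_simp
    linear_combination -hLt
  exact ⟨hA, hB, hC, hD⟩

end IsA8RicciFlow

theorem stmt_13_general (l1 l2 l3 l4 m1 m2 m3 m4 : ℝ)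
    (A B C D Ab Bb Cb Db : ℝ → ℝ)
    (hApos : ∀ t ∈ Set.Ici (0:ℝ), 0 < A t) (hBpos : ∀ t ∈ Set.Ici (0:ℝ), 0 < B t)
    (hCpos : ∀ t ∈ Set.Ici (0:ℝ), 0 < C t) (hDpos : ∀ t ∈ Set.Ici (0:ℝ), 0 < D t)
    (hAbpos : ∀ t ∈ Set.Ici (0:ℝ), 0 < Ab t) (hBbpos : ∀ t ∈ Set.Ici (0:ℝ), 0 < Bb t)
    (hCbpos : ∀ t ∈ Set.Ici (0:ℝ), 0 < Cb t) (hDbpos : ∀ t ∈ Set.Ici (0:ℝ), 0 < Db t)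
    (hA : ∀ t ∈ Set.Ici (0:ℝ),
      HasDerivWithinAt A (C t / B t + B t / C t - 2) (Set.Ici 0) t)
    (hB : ∀ t ∈ Set.Ici (0:ℝ),
      HasDerivWithinAt B (-(B t) ^ 2 / (A t * C t) + C t / A t + D t / C t) (Set.Ici 0) t)
    (hC : ∀ t ∈ Set.Ici (0:ℝ),
      HasDerivWithinAt C (-(C t) ^ 2 / (A t * B t) + B t / A t + D t / B t) (Set.Ici 0) t)
    (hD : ∀ t ∈ Set.Ici (0:ℝ),
      HasDerivWithinAt D (-(D t) ^ 2 / (B t * C t)) (Set.Ici 0) t)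
    (hA0 : A 0 = l1) (hB0 : B 0 = l2) (hC0 : C 0 = l3) (hD0 : D 0 = l4)
    (hBClim : Filter.Tendsto (fun t => B t / C t) Filter.atTop (nhds 1))
    (hAb : ∀ t ∈ Set.Ici (0:ℝ),
      HasDerivWithinAt Ab (Cb t / Bb t + Bb t / Cb t - 2) (Set.Ici 0) t)
    (hBb : ∀ t ∈ Set.Ici (0:ℝ),
      HasDerivWithinAt Bb (-(Bb t) ^ 2 / (Ab t * Cb t) + Cb t / Ab t + Db t / Cb t) (Set.Ici 0) t)
    (hCb : ∀ t ∈ Set.Ici (0:ℝ),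
      HasDerivWithinAt Cb (-(Cb t) ^ 2 / (Ab t * Bb t) + Bb t / Ab t + Db t / Bb t) (Set.Ici 0) t)
    (hDb : ∀ t ∈ Set.Ici (0:ℝ),
      HasDerivWithinAt Db (-(Db t) ^ 2 / (Bb t * Cb t)) (Set.Ici 0) t)
    (hAb0 : Ab 0 = m1) (hBb0 : Bb 0 = m2) (hCb0 : Cb 0 = m3) (hDb0 : Db 0 = m4)
    (hBbClim : Filter.Tendsto (fun t => Bb t / Cb t) Filter.atTop (nhds 1)) :
    Filter.Tendsto (fun t : ℝ =>
        ((A t - Ab t) / A t) ^ 2 + ((B t - Bb t) / B t) ^ 2 +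
        ((C t - Cb t) / C t) ^ 2 + ((D t - Db t) / D t) ^ 2)
      Filter.atTop (nhds 0) ↔
      (m2 * m3 * m4 ^ 2 = l2 * l3 * l4 ^ 2 ∧
       m1 * m4 * (m2 + m3) = l1 * l4 * (l2 + l3)) := by
  have F : IsA8RicciFlow A B C D := ⟨hApos, hBpos, hCpos, hDpos, hA, hB, hC, hD⟩
  have Fb : IsA8RicciFlow Ab Bb Cb Db := ⟨hAbpos, hBbpos, hCbpos, hDbpos, hAb, hBb, hCb, hDb⟩
  subst hA0 hB0 hC0 hD0 hAb0 hBb0 hCb0 hDb0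
  rw [tendsto_add_nhds_zero_iff_of_nonneg (fun _ => by positivity) (fun _ => by positivity),
    tendsto_add_nhds_zero_iff_of_nonneg (fun _ => by positivity) (fun _ => by positivity),
    tendsto_add_nhds_zero_iff_of_nonneg (fun _ => by positivity) (fun _ => by positivity),
    tendsto_sq_sub_div_iff (F.eventually_pos.mono fun _ h => h.1.ne'),
    tendsto_sq_sub_div_iff (F.eventually_pos.mono fun _ h => h.2.1.ne'),
    tendsto_sq_sub_div_iff (F.eventually_pos.mono fun _ h => h.2.2.1.ne'),
    tendsto_sq_sub_div_iff (F.eventually_pos.mono fun _ h => h.2.2.2.ne')]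
  constructor
  · rintro ⟨⟨⟨hρA, hρB⟩, hρC⟩, hρD⟩
    exact F.invariants_eq_of_tendsto_div Fb hBClim hρA hρB hρC hρD
  · rintro ⟨hK, hL⟩
    obtain ⟨hρA, hρB, hρC, hρD⟩ := F.tendsto_div_of_invariants_eq Fb hBClim hBbClim hK hL
    exact ⟨⟨⟨hρA, hρB⟩, hρC⟩, hρD⟩

/-- class A8: for solutions of the A8 Ricci-flow ODE system,
quasi-convergence in the same frame holds iff `λ̄₂λ̄₃λ̄₄² = λ₂λ₃λ₄²` and
`λ̄₁λ̄₄(λ̄₂+λ̄₃) = λ₁λ₄(λ₂+λ₃)`; `[g]_α` is a 2-parameter family. -/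
theorem stmt_13 (l1 l2 l3 l4 m1 m2 m3 m4 : ℝ)
    (hl1 : 0 < l1) (hl2 : 0 < l2) (hl3 : 0 < l3) (hl4 : 0 < l4)
    (hm1 : 0 < m1) (hm2 : 0 < m2) (hm3 : 0 < m3) (hm4 : 0 < m4)
    (A B C D Ab Bb Cb Db : ℝ → ℝ)
    (hApos : ∀ t ∈ Set.Ici (0:ℝ), 0 < A t) (hBpos : ∀ t ∈ Set.Ici (0:ℝ), 0 < B t)
    (hCpos : ∀ t ∈ Set.Ici (0:ℝ), 0 < C t) (hDpos : ∀ t ∈ Set.Ici (0:ℝ), 0 < D t)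
    (hAbpos : ∀ t ∈ Set.Ici (0:ℝ), 0 < Ab t) (hBbpos : ∀ t ∈ Set.Ici (0:ℝ), 0 < Bb t)
    (hCbpos : ∀ t ∈ Set.Ici (0:ℝ), 0 < Cb t) (hDbpos : ∀ t ∈ Set.Ici (0:ℝ), 0 < Db t)
    (hA : ∀ t ∈ Set.Ici (0:ℝ),
      HasDerivWithinAt A (C t / B t + B t / C t - 2) (Set.Ici 0) t)
    (hB : ∀ t ∈ Set.Ici (0:ℝ),
      HasDerivWithinAt B (-(B t) ^ 2 / (A t * C t) + C t / A t + D t / C t) (Set.Ici 0) t)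
    (hC : ∀ t ∈ Set.Ici (0:ℝ),
      HasDerivWithinAt C (-(C t) ^ 2 / (A t * B t) + B t / A t + D t / B t) (Set.Ici 0) t)
    (hD : ∀ t ∈ Set.Ici (0:ℝ),
      HasDerivWithinAt D (-(D t) ^ 2 / (B t * C t)) (Set.Ici 0) t)
    (hA0 : A 0 = l1) (hB0 : B 0 = l2) (hC0 : C 0 = l3) (hD0 : D 0 = l4)
    (hBlim : Filter.Tendsto B Filter.atTop Filter.atTop)
    (hBClim : Filter.Tendsto (fun t => B t / C t) Filter.atTop (nhds 1))
    (hAb : ∀ t ∈ Set.Ici (0:ℝ),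
      HasDerivWithinAt Ab (Cb t / Bb t + Bb t / Cb t - 2) (Set.Ici 0) t)
    (hBb : ∀ t ∈ Set.Ici (0:ℝ),
      HasDerivWithinAt Bb (-(Bb t) ^ 2 / (Ab t * Cb t) + Cb t / Ab t + Db t / Cb t) (Set.Ici 0) t)
    (hCb : ∀ t ∈ Set.Ici (0:ℝ),
      HasDerivWithinAt Cb (-(Cb t) ^ 2 / (Ab t * Bb t) + Bb t / Ab t + Db t / Bb t) (Set.Ici 0) t)
    (hDb : ∀ t ∈ Set.Ici (0:ℝ),
      HasDerivWithinAt Db (-(Db t) ^ 2 / (Bb t * Cb t)) (Set.Ici 0) t)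
    (hAb0 : Ab 0 = m1) (hBb0 : Bb 0 = m2) (hCb0 : Cb 0 = m3) (hDb0 : Db 0 = m4)
    (hBblim : Filter.Tendsto Bb Filter.atTop Filter.atTop)
    (hBbClim : Filter.Tendsto (fun t => Bb t / Cb t) Filter.atTop (nhds 1)) :
    Filter.Tendsto (fun t : ℝ =>
        ((A t - Ab t) / A t) ^ 2 + ((B t - Bb t) / B t) ^ 2 +
        ((C t - Cb t) / C t) ^ 2 + ((D t - Db t) / D t) ^ 2)
      Filter.atTop (nhds 0) ↔
      (m2 * m3 * m4 ^ 2 = l2 * l3 * l4 ^ 2 ∧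
       m1 * m4 * (m2 + m3) = l1 * l4 * (l2 + l3)) :=
  stmt_13_general l1 l2 l3 l4 m1 m2 m3 m4 A B C D Ab Bb Cb Db hApos hBpos hCpos hDpos hAbpos hBbpos
    hCbpos hDbpos hA hB hC hD hA0 hB0 hC0 hD0 hBClim hAb hBb hCb hDb hAb0 hBb0 hCb0 hDb0 hBbClim
end

section
/- Let λ₁,λ₂,λ₃,λ₄ and λ̄₁,λ̄₂,λ̄₃,λ̄₄ be positive reals and let a,b,c be real numbers. Suppose A,B,C,D : [0,∞) → (0,∞) are differentiable and satisfy dA/dt = C/B + B/C - 2, dB/dt = -B²/(AC) + C/A + D/C, dC/dt = -C²/(AB) + B/A + D/B, dD/dt = -D²/(BC) with A(0)=λ₁, B(0)=λ₂, C(0)=λ₃, D(0)=λ₄, with B(t) → ∞ and B(t)/C(t) → 1 as t → ∞; let Ā,B̄,C̄,D̄ satisfy the same ODE system with initial data λ̄₁,λ̄₂,λ̄₃,λ̄₄ and the same asymptotic properties. Then the quantity ((A-Ā-a²B̄-b²C̄-c²D̄)/A)² + ((B-B̄-a²D̄)/B)² + ((C-C̄-b²D̄)/C)² + ((D-D̄)/D)²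 + 2(aB̄+acD̄)²/(AB) + 2(bC̄+bcD̄)²/(AC) + 2(cD̄)²/(AD) + 2(abD̄)²/(BC) + 2(aD̄)²/(BD) + 2(bD̄)²/(CD) tends to 0 as t → ∞ if and only if a = 0, b = 0, λ̄₂λ̄₃λ̄₄² = λ₂λ₃λ₄² and λ̄₁λ̄₄(λ̄₂+λ̄₃) = λ₁λ₄(λ₂+λ₃); in particular the quasi-convergence class [g] is exactly a 2-parameter family. -/
/-!
Along the flow `BCD²` and `AD(B+C)` are conserved and `D⁻³` is affine in `t` with slope
`3 / BCD²`. Hence `D → 0`, `(D̄/D)³ → B̄C̄D̄² / BCD²`, and, as `B/C → 1`, `A` converges to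
`AD(B+C) / (2√(BCD²))`; so `D̄/D → 1` iff the invariants `BCD²` agree, and then `Ā/A → 1` iff the
invariants `AD(B+C)` agree too, while `B̄C̄/BC = (D/D̄)²` and `B/C, B̄/C̄ → 1` give `B̄/B, C̄/C → 1`.
If `|ḡ - g|²_g → 0`, its summand `((B - B̄ - a²D̄)/B)²` forces `B̄/B → 1`, so the summand
`2(aB̄ + acD̄)²/(AB)` behaves like `2a²B/A`, which is unbounded unless `a = 0` because `B → ∞`
while `A` converges; symmetrically `b = 0`.
-/

open Filter Set Topology

theorem eq_of_hasDerivWithinAt_Ici_zero {f : ℝ → ℝ} {a : ℝ}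
    (hf : ∀ t ∈ Ici a, HasDerivWithinAt f 0 (Ici a) t) : ∀ t ∈ Ici a, f t = f a := fun t ht =>
  constant_of_has_deriv_right_zero
    (fun x hx => (hf x hx.1).continuousWithinAt.mono Icc_subset_Ici_self)
    (fun x hx => (hf x hx.1).mono (Ici_subset_Ici.2 hx.1)) t (right_mem_Icc.2 ht)

theorem Filter.Tendsto.of_pow_of_nonneg {α : Type*} {l : Filter α} {f : α → ℝ} {x : ℝ} {n : ℕ}
    (h : Tendsto (fun t => f t ^ n) l (𝓝 (x ^ n))) (hn : n ≠ 0) (hf : ∀ᶠ t in l, 0 ≤ f t)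
    (hx : 0 ≤ x) : Tendsto f l (𝓝 x) := by
  have hroot := h.rpow_const (p := (n : ℝ)⁻¹) (Or.inr (by positivity))
  rw [Real.pow_rpow_inv_natCast hx hn] at hroot
  exact hroot.congr' (hf.mono fun t ht => Real.pow_rpow_inv_natCast ht hn)

theorem Filter.Tendsto.of_sq_nhds_zero {α : Type*} {l : Filter α} {f : α → ℝ}
    (h : Tendsto (fun t => f t ^ 2) l (𝓝 0)) : Tendsto f l (𝓝 0) := by
  have habs : Tendsto (fun t => |f t| ^ 2) l (𝓝 (0 ^ 2)) := by
    rw [zero_pow two_ne_zero]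
    simpa only [sq_abs] using h
  exact (tendsto_zero_iff_abs_tendsto_zero f).2
    (habs.of_pow_of_nonneg two_ne_zero (.of_forall fun t => abs_nonneg _) le_rfl)

section OrderedField

variable {𝕜 α : Type*} [Field 𝕜] [LinearOrder 𝕜] [IsStrictOrderedRing 𝕜] [TopologicalSpace 𝕜]
  [OrderTopology 𝕜] {l : Filter α}

theorem tendsto_atTop_of_tendsto_div_one {f g : α → 𝕜} (hf : Tendsto f l atTop)
    (h : Tendsto (fun x => f x / g x) l (𝓝 1)) : Tendsto g l atTop := by
  have hgf : Tendsto (fun x => g x / f x) l (𝓝 1) := by simpa using h.inv₀ one_ne_zero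
  refine (hf.atTop_mul_pos one_pos hgf).congr' ?_
  filter_upwards [hf.eventually_gt_atTop 0] with x hx
  field_simp

theorem tendsto_affine_div_affine (p q r s : 𝕜) (hs : s ≠ 0) :
    Tendsto (fun t : 𝕜 => (p + q * t) / (r + s * t)) atTop (𝓝 (q / s)) := by
  have hlim : Tendsto (fun t : 𝕜 => (p * t⁻¹ + q) / (r * t⁻¹ + s)) atTop (𝓝 (q / s)) := by
    have hnum := (tendsto_inv_atTop_zero.const_mul p).add_const q
    have hden := (tendsto_inv_atTop_zero.const_mul r).add_const s
    simp only [mul_zero, zero_add] at hnum hden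
    exact hnum.div hden hs
  refine hlim.congr' ?_
  filter_upwards [eventually_gt_atTop 0] with t ht
  rw [show p * t⁻¹ + q = (p + q * t) / t by field_simp,
    show r * t⁻¹ + s = (r + s * t) / t by field_simp, div_div_div_cancel_right₀ ht.ne']

theorem eq_zero_of_tendsto_const_mul_atTop [l.NeBot] {f : α → 𝕜} {c : 𝕜} (hc : 0 ≤ c)
    (hf : Tendsto f l atTop) (h : Tendsto (fun x => c * f x) l (𝓝 0)) : c = 0 := by
  by_contra hne
  exact not_tendsto_nhds_of_tendsto_atTop (hf.const_mul_atTop (hc.lt_of_ne' hne)) 0 h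

end OrderedField

/-- Ricci flow on `[0, ∞)` of a locally homogeneous metric of class A8, diagonal with components
`A, B, C, D` in a suitable frame. -/
structure IsA8Flow (A B C D : ℝ → ℝ) : Prop where
  pos_A : ∀ t ∈ Ici (0:ℝ), 0 < A t
  pos_B : ∀ t ∈ Ici (0:ℝ), 0 < B t
  pos_C : ∀ t ∈ Ici (0:ℝ), 0 < C t
  pos_D : ∀ t ∈ Ici (0:ℝ), 0 < D t
  deriv_A : ∀ t ∈ Ici (0:ℝ), HasDerivWithinAt A (C t / B t + B t / C t - 2) (Ici 0) t
  deriv_B : ∀ t ∈ Ici (0:ℝ),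
    HasDerivWithinAt B (-(B t) ^ 2 / (A t * C t) + C t / A t + D t / C t) (Ici 0) t
  deriv_C : ∀ t ∈ Ici (0:ℝ),
    HasDerivWithinAt C (-(C t) ^ 2 / (A t * B t) + B t / A t + D t / B t) (Ici 0) t
  deriv_D : ∀ t ∈ Ici (0:ℝ), HasDerivWithinAt D (-(D t) ^ 2 / (B t * C t)) (Ici 0) t

namespace IsA8Flow

variable {A B C D Ab Bb Cb Db : ℝ → ℝ}

theorem pos (h : IsA8Flow A B C D) {t : ℝ} (ht : 0 ≤ t) :
    0 < A t ∧ 0 < B t ∧ 0 < C t ∧ 0 < D t :=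
  ⟨h.pos_A t ht, h.pos_B t ht, h.pos_C t ht, h.pos_D t ht⟩

theorem swap (h : IsA8Flow A B C D) : IsA8Flow A C B D where
  pos_A := h.pos_A
  pos_B := h.pos_C
  pos_C := h.pos_B
  pos_D := h.pos_D
  deriv_A t ht := (h.deriv_A t ht).congr_deriv (by ring)
  deriv_B := h.deriv_C
  deriv_C := h.deriv_B
  deriv_D t ht := (h.deriv_D t ht).congr_deriv (by rw [mul_comm])

theorem B_mul_C_mul_D_sq (h : IsA8Flow A B C D) {t : ℝ} (ht : t ∈ Ici 0) :
    B t * C t * D t ^ 2 = B 0 * C 0 * D 0 ^ 2 := by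
  refine eq_of_hasDerivWithinAt_Ici_zero (f := fun t => B t * C t * D t ^ 2) (fun s hs => ?_) t ht
  obtain ⟨hA, hB, hC, hD⟩ := h.pos hs
  refine (((h.deriv_B s hs).mul (h.deriv_C s hs)).mul ((h.deriv_D s hs).pow 2)).congr_deriv ?_
  simp only [Pi.mul_apply, Pi.pow_apply]
  field_simp
  ring

theorem A_mul_D_mul_B_add_C (h : IsA8Flow A B C D) {t : ℝ} (ht : t ∈ Ici 0) :
    A t * D t * (B t + C t) = A 0 * D 0 * (B 0 + C 0) := by
  refine eq_of_hasDerivWithinAt_Ici_zero (f := fun t => A t * D t * (B t + C t))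
    (fun s hs => ?_) t ht
  obtain ⟨hA, hB, hC, hD⟩ := h.pos hs
  refine (((h.deriv_A s hs).mul (h.deriv_D s hs)).mul
    ((h.deriv_B s hs).add (h.deriv_C s hs))).congr_deriv ?_
  simp only [Pi.mul_apply, Pi.add_apply]
  field_simp
  ring

theorem inv_D_pow_three (h : IsA8Flow A B C D) {t : ℝ} (ht : t ∈ Ici 0) :
    (D t)⁻¹ ^ 3 = (D 0)⁻¹ ^ 3 + 3 / (B 0 * C 0 * D 0 ^ 2) * t := by
  have hconst := eq_of_hasDerivWithinAt_Ici_zero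
    (f := fun t => (D t)⁻¹ ^ 3 - 3 / (B 0 * C 0 * D 0 ^ 2) * t) (fun s hs => ?_) t ht
  · simp only [mul_zero, sub_zero] at hconst
    linarith
  obtain ⟨-, hB, hC, hD⟩ := h.pos hs
  refine ((((h.deriv_D s hs).inv hD.ne').pow 3).sub
    ((hasDerivWithinAt_id s _).const_mul _)).congr_deriv ?_
  rw [Pi.inv_apply, ← h.B_mul_C_mul_D_sq hs]
  have := hD.ne'
  norm_num only
  field_simp
  ring

theorem tendsto_D_zero (h : IsA8Flow A B C D) : Tendsto D atTop (𝓝 0) := by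
  obtain ⟨-, hB, hC, hD⟩ := h.pos le_rfl
  have hlin : Tendsto (fun t => (D 0)⁻¹ ^ 3 + 3 / (B 0 * C 0 * D 0 ^ 2) * t) atTop atTop :=
    tendsto_atTop_add_const_left _ _ (tendsto_id.const_mul_atTop (by positivity))
  refine Tendsto.of_pow_of_nonneg (n := 3) ?_ three_ne_zero
    (eventually_ge_atTop 0 |>.mono fun t ht => (h.pos_D t ht).le) le_rfl
  rw [zero_pow three_ne_zero]
  refine hlin.inv_tendsto_atTop.congr' ?_
  filter_upwards [eventually_ge_atTop 0] with t ht
  rw [Pi.inv_apply, ← h.inv_D_pow_three ht, inv_pow, inv_inv]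

theorem tendsto_A (h : IsA8Flow A B C D) (hBC : Tendsto (fun t => B t / C t) atTop (𝓝 1)) :
    Tendsto A atTop (𝓝 (A 0 * D 0 * (B 0 + C 0) / (2 * √(B 0 * C 0 * D 0 ^ 2)))) := by
  obtain ⟨hA, hB, hC, hD⟩ := h.pos le_rfl
  have hK : 0 < B 0 * C 0 * D 0 ^ 2 := by positivity
  have hCB : Tendsto (fun t => C t / B t) atTop (𝓝 1) := by simpa using hBC.inv₀ one_ne_zero
  have hsq : Tendsto (fun t => (A 0 * D 0 * (B 0 + C 0)) ^ 2 /
      (B 0 * C 0 * D 0 ^ 2 * (B t / C t + 2 + C t / B t))) atTop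
      (𝓝 ((A 0 * D 0 * (B 0 + C 0)) ^ 2 / (B 0 * C 0 * D 0 ^ 2 * (1 + 2 + 1)))) :=
    tendsto_const_nhds.div (tendsto_const_nhds.mul ((hBC.add_const 2).add hCB)) (by positivity)
  refine Tendsto.of_pow_of_nonneg (n := 2) ?_ two_ne_zero
    (eventually_ge_atTop 0 |>.mono fun t ht => (h.pos_A t ht).le) (by positivity)
  rw [show (A 0 * D 0 * (B 0 + C 0) / (2 * √(B 0 * C 0 * D 0 ^ 2))) ^ 2 =
      (A 0 * D 0 * (B 0 + C 0)) ^ 2 / (B 0 * C 0 * D 0 ^ 2 * (1 + 2 + 1)) by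
    rw [div_pow, mul_pow (2:ℝ), Real.sq_sqrt hK.le]; ring]
  -- `A² · BCD² · (B/C + 2 + C/B) = (AD(B+C))²` along the flow
  refine hsq.congr' ?_
  filter_upwards [eventually_ge_atTop 0] with t ht
  obtain ⟨hAt, hBt, hCt, hDt⟩ := h.pos ht
  rw [← h.B_mul_C_mul_D_sq ht, ← h.A_mul_D_mul_B_add_C ht]
  field_simp
  ring

theorem tendsto_div_A_of_tendsto_zero (h : IsA8Flow A B C D)
    (hBC : Tendsto (fun t => B t / C t) atTop (𝓝 1)) {f : ℝ → ℝ} (hf : Tendsto f atTop (𝓝 0)) :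
    Tendsto (fun t => f t / A t) atTop (𝓝 0) := by
  obtain ⟨hA, hB, hC, hD⟩ := h.pos le_rfl
  have hlim := hf.div (h.tendsto_A hBC) (by positivity)
  rwa [zero_div] at hlim

theorem tendsto_div_D_pow_three (hg : IsA8Flow A B C D) (hg' : IsA8Flow Ab Bb Cb Db) :
    Tendsto (fun t => (Db t / D t) ^ 3) atTop
      (𝓝 (Bb 0 * Cb 0 * Db 0 ^ 2 / (B 0 * C 0 * D 0 ^ 2))) := by
  obtain ⟨-, hB, hC, hD⟩ := hg.pos le_rfl
  obtain ⟨-, hBb, hCb, hDb⟩ := hg'.pos le_rfl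
  have hlim := tendsto_affine_div_affine ((D 0)⁻¹ ^ 3) (3 / (B 0 * C 0 * D 0 ^ 2))
    ((Db 0)⁻¹ ^ 3) (3 / (Bb 0 * Cb 0 * Db 0 ^ 2)) (by positivity)
  rw [div_div_div_cancel_left' _ _ three_ne_zero] at hlim
  refine hlim.congr' ?_
  filter_upwards [eventually_ge_atTop 0] with t ht
  rw [← hg.inv_D_pow_three ht, ← hg'.inv_D_pow_three ht, div_pow, inv_pow, inv_pow, inv_div_inv]

theorem tendsto_div_D_one_iff (hg : IsA8Flow A B C D) (hg' : IsA8Flow Ab Bb Cb Db) :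
    Tendsto (fun t => Db t / D t) atTop (𝓝 1) ↔
      Bb 0 * Cb 0 * Db 0 ^ 2 = B 0 * C 0 * D 0 ^ 2 := by
  obtain ⟨-, hB, hC, hD⟩ := hg.pos le_rfl
  have hK : B 0 * C 0 * D 0 ^ 2 ≠ 0 := by positivity
  have hcube := hg.tendsto_div_D_pow_three hg'
  constructor
  · intro hlim
    have := tendsto_nhds_unique hcube (by simpa using hlim.pow 3)
    rwa [div_eq_one_iff_eq hK] at this
  · intro hKeq
    rw [hKeq, div_self hK, ← one_pow 3] at hcube
    exact hcube.of_pow_of_nonneg three_ne_zero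
      (eventually_ge_atTop 0 |>.mono fun t ht => div_nonneg (hg'.pos_D t ht).le (hg.pos_D t ht).le)
      zero_le_one

theorem tendsto_div_A_one_iff (hg : IsA8Flow A B C D) (hg' : IsA8Flow Ab Bb Cb Db)
    (hBC : Tendsto (fun t => B t / C t) atTop (𝓝 1))
    (hBCb : Tendsto (fun t => Bb t / Cb t) atTop (𝓝 1))
    (hK : Bb 0 * Cb 0 * Db 0 ^ 2 = B 0 * C 0 * D 0 ^ 2) :
    Tendsto (fun t => Ab t / A t) atTop (𝓝 1) ↔
      Ab 0 * Db 0 * (Bb 0 + Cb 0) = A 0 * D 0 * (B 0 + C 0) := by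
  obtain ⟨hA, hB, hC, hD⟩ := hg.pos le_rfl
  have hL : A 0 * D 0 * (B 0 + C 0) ≠ 0 := by positivity
  have hlim := (hg'.tendsto_A hBCb).div (hg.tendsto_A hBC) (by positivity)
  rw [hK, div_div_div_cancel_right₀ (by positivity)] at hlim
  constructor
  · intro h1
    have := tendsto_nhds_unique hlim h1
    rwa [div_eq_one_iff_eq hL] at this
  · intro hLeq
    rwa [hLeq, div_self hL] at hlim

theorem tendsto_div_B_one_of_eq (hg : IsA8Flow A B C D) (hg' : IsA8Flow Ab Bb Cb Db)
    (hBC : Tendsto (fun t => B t / C t) atTop (𝓝 1))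
    (hBCb : Tendsto (fun t => Bb t / Cb t) atTop (𝓝 1))
    (hK : Bb 0 * Cb 0 * Db 0 ^ 2 = B 0 * C 0 * D 0 ^ 2) :
    Tendsto (fun t => Bb t / B t) atTop (𝓝 1) := by
  have hD : Tendsto (fun t => D t / Db t) atTop (𝓝 1) := by
    simpa using ((hg.tendsto_div_D_one_iff hg').2 hK).inv₀ one_ne_zero
  have hsq : Tendsto (fun t => Bb t / Cb t / (B t / C t) * (D t / Db t) ^ 2) atTop (𝓝 (1 ^ 2)) := by
    simpa using (hBCb.div hBC one_ne_zero).mul (hD.pow 2)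
  refine (hsq.congr' ?_).of_pow_of_nonneg two_ne_zero
    (eventually_ge_atTop 0 |>.mono fun t ht => div_nonneg (hg'.pos_B t ht).le (hg.pos_B t ht).le)
    zero_le_one
  filter_upwards [eventually_ge_atTop 0] with t ht
  obtain ⟨-, hBt, hCt, hDt⟩ := hg.pos ht
  obtain ⟨-, hBbt, hCbt, hDbt⟩ := hg'.pos ht
  have hKt : Bb t * Cb t * Db t ^ 2 = B t * C t * D t ^ 2 := by
    rw [hg.B_mul_C_mul_D_sq ht, hg'.B_mul_C_mul_D_sq ht, hK]
  field_simp
  exact hKt.symm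

end IsA8Flow

/-- `|ḡ - g|²_g` for `g = diag(A, B, C, D)` in a frame `α` and `ḡ = diag(Ab, Bb, Cb, Db)` in a
frame `β` whose transition matrix to `α` has rows `(1,a,b,c), (0,1,0,a), (0,0,1,b), (0,0,0,1)`. -/
noncomputable def normSqDiff (a b c : ℝ) (A B C D Ab Bb Cb Db : ℝ → ℝ) (t : ℝ) : ℝ :=
  ((A t - Ab t - a ^ 2 * Bb t - b ^ 2 * Cb t - c ^ 2 * Db t) / A t) ^ 2 +
    ((B t - Bb t - a ^ 2 * Db t) / B t) ^ 2 +
    ((C t - Cb t - b ^ 2 * Db t) / C t) ^ 2 +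
    ((D t - Db t) / D t) ^ 2 +
    2 * (a * Bb t + a * c * Db t) ^ 2 / (A t * B t) +
    2 * (b * Cb t + b * c * Db t) ^ 2 / (A t * C t) +
    2 * (c * Db t) ^ 2 / (A t * D t) +
    2 * (a * b * Db t) ^ 2 / (B t * C t) +
    2 * (a * Db t) ^ 2 / (B t * D t) +
    2 * (b * Db t) ^ 2 / (C t * D t)

theorem normSqDiff_swap (a b c : ℝ) (A B C D Ab Bb Cb Db : ℝ → ℝ) :
    normSqDiff b a c A C B D Ab Cb Bb Db = normSqDiff a b c A B C D Ab Bb Cb Db := by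
  funext t
  unfold normSqDiff
  ring

namespace IsA8Flow

variable {A B C D Ab Bb Cb Db : ℝ → ℝ} {a b c : ℝ}

theorem tendsto_div_D_of_tendsto_normSqDiff (hg : IsA8Flow A B C D)
    (h : Tendsto (normSqDiff a b c A B C D Ab Bb Cb Db) atTop (𝓝 0)) :
    Tendsto (fun t => Db t / D t) atTop (𝓝 1) := by
  have hsummand : Tendsto (fun t => ((D t - Db t) / D t) ^ 2) atTop (𝓝 0) := by
    refine squeeze_zero' (.of_forall fun t => sq_nonneg _) ?_ h
    filter_upwards [eventually_ge_atTop 0] with t ht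
    obtain ⟨hA, hB, hC, hD⟩ := hg.pos ht
    unfold normSqDiff
    iterate 6 refine le_add_of_le_of_nonneg ?_ (by positivity)
    exact le_add_of_nonneg_left (by positivity)
  have hlim := (tendsto_const_nhds (x := (1:ℝ))).sub hsummand.of_sq_nhds_zero
  rw [sub_zero] at hlim
  refine hlim.congr' ?_
  filter_upwards [eventually_ge_atTop 0] with t ht
  have := (hg.pos_D t ht).ne'
  field_simp
  ring

theorem tendsto_div_A_of_tendsto_normSqDiff (hg : IsA8Flow A B C D) (hg' : IsA8Flow Ab Bb Cb Db)
    (hBC : Tendsto (fun t => B t / C t) atTop (𝓝 1))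
    (h : Tendsto (normSqDiff 0 0 c A B C D Ab Bb Cb Db) atTop (𝓝 0)) :
    Tendsto (fun t => Ab t / A t) atTop (𝓝 1) := by
  have hsummand : Tendsto (fun t => ((A t - Ab t - c ^ 2 * Db t) / A t) ^ 2) atTop (𝓝 0) := by
    refine squeeze_zero' (.of_forall fun t => sq_nonneg _) ?_ h
    filter_upwards [eventually_ge_atTop 0] with t ht
    obtain ⟨hA, hB, hC, hD⟩ := hg.pos ht
    unfold normSqDiff
    iterate 9 refine le_add_of_le_of_nonneg ?_ (by positivity)
    simp
  have hDbA := hg.tendsto_div_A_of_tendsto_zero hBC hg'.tendsto_D_zero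
  have hlim := ((tendsto_const_nhds (x := (1:ℝ))).sub (hDbA.const_mul (c ^ 2))).sub
    hsummand.of_sq_nhds_zero
  rw [mul_zero, sub_zero, sub_zero] at hlim
  refine hlim.congr' ?_
  filter_upwards [eventually_ge_atTop 0] with t ht
  have := (hg.pos_A t ht).ne'
  field_simp
  ring

theorem eq_zero_of_tendsto_normSqDiff (hg : IsA8Flow A B C D) (hg' : IsA8Flow Ab Bb Cb Db)
    (hB : Tendsto B atTop atTop) (hBC : Tendsto (fun t => B t / C t) atTop (𝓝 1))
    (h : Tendsto (normSqDiff a b c A B C D Ab Bb Cb Db) atTop (𝓝 0)) : a = 0 := by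
  have hsummandB : Tendsto (fun t => ((B t - Bb t - a ^ 2 * Db t) / B t) ^ 2) atTop (𝓝 0) := by
    refine squeeze_zero' (.of_forall fun t => sq_nonneg _) ?_ h
    filter_upwards [eventually_ge_atTop 0] with t ht
    obtain ⟨hA, hB, hC, hD⟩ := hg.pos ht
    unfold normSqDiff
    iterate 8 refine le_add_of_le_of_nonneg ?_ (by positivity)
    exact le_add_of_nonneg_left (by positivity)
  have hsummandAB : Tendsto (fun t => 2 * (a * Bb t + a * c * Db t) ^ 2 / (A t * B t)) atTop
      (𝓝 0) := by
    refine squeeze_zero' ?_ ?_ h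
    all_goals filter_upwards [eventually_ge_atTop 0] with t ht
    all_goals obtain ⟨hA, hB, hC, hD⟩ := hg.pos ht
    · positivity
    unfold normSqDiff
    iterate 5 refine le_add_of_le_of_nonneg ?_ (by positivity)
    exact le_add_of_nonneg_left (by positivity)
  have hDbB : Tendsto (fun t => Db t / B t) atTop (𝓝 0) := hg'.tendsto_D_zero.div_atTop hB
  have hBbB : Tendsto (fun t => Bb t / B t) atTop (𝓝 1) := by
    have hlim := ((tendsto_const_nhds (x := (1:ℝ))).sub (hDbB.const_mul (a ^ 2))).sub
      hsummandB.of_sq_nhds_zero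
    rw [mul_zero, sub_zero, sub_zero] at hlim
    refine hlim.congr' ?_
    filter_upwards [eventually_ge_atTop 0] with t ht
    have := (hg.pos_B t ht).ne'
    field_simp
    ring
  obtain ⟨hA, hB0, hC0, hD0⟩ := hg.pos le_rfl
  have hBA : Tendsto (fun t => B t / A t) atTop atTop :=
    hB.atTop_mul_pos (inv_pos.2 (by positivity)) ((hg.tendsto_A hBC).inv₀ (by positivity))
  have hgrow : Tendsto (fun t => (Bb t / B t + c * (Db t / B t)) ^ 2 * (B t / A t)) atTop
      atTop := by
    refine Tendsto.pos_mul_atTop one_pos ?_ hBA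
    simpa using (hBbB.add (hDbB.const_mul c)).pow 2
  have ha : 2 * a ^ 2 = 0 := by
    refine eq_zero_of_tendsto_const_mul_atTop (by positivity) hgrow (hsummandAB.congr' ?_)
    filter_upwards [eventually_ge_atTop 0] with t ht
    obtain ⟨hAt, hBt, -, -⟩ := hg.pos ht
    field_simp
  simpa using ha

theorem tendsto_normSqDiff_zero_of_eq (hg : IsA8Flow A B C D) (hg' : IsA8Flow Ab Bb Cb Db)
    (hBC : Tendsto (fun t => B t / C t) atTop (𝓝 1))
    (hBCb : Tendsto (fun t => Bb t / Cb t) atTop (𝓝 1)) (c : ℝ)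
    (hK : Bb 0 * Cb 0 * Db 0 ^ 2 = B 0 * C 0 * D 0 ^ 2)
    (hL : Ab 0 * Db 0 * (Bb 0 + Cb 0) = A 0 * D 0 * (B 0 + C 0)) :
    Tendsto (normSqDiff 0 0 c A B C D Ab Bb Cb Db) atTop (𝓝 0) := by
  have hAbA := (hg.tendsto_div_A_one_iff hg' hBC hBCb hK).2 hL
  have hBbB := hg.tendsto_div_B_one_of_eq hg' hBC hBCb hK
  have hCbC := hg.swap.tendsto_div_B_one_of_eq hg'.swap (by simpa using hBC.inv₀ one_ne_zero)
    (by simpa using hBCb.inv₀ one_ne_zero) (by linear_combination hK)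
  have hDbD := (hg.tendsto_div_D_one_iff hg').2 hK
  have hDA := hg.tendsto_div_A_of_tendsto_zero hBC hg.tendsto_D_zero
  have hDbA := hg.tendsto_div_A_of_tendsto_zero hBC hg'.tendsto_D_zero
  have hsq : ∀ {f : ℝ → ℝ}, Tendsto f atTop (𝓝 1) →
      Tendsto (fun t => (1 - f t) ^ 2) atTop (𝓝 0) := fun hf => by
    simpa using ((tendsto_const_nhds (x := (1:ℝ))).sub hf).pow 2
  have hAbA' : Tendsto (fun t => Ab t / A t + c ^ 2 * (Db t / A t)) atTop (𝓝 1) := by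
    simpa using hAbA.add (hDbA.const_mul (c ^ 2))
  have hDA' : Tendsto (fun t => 2 * c ^ 2 * ((Db t / D t) ^ 2 * (D t / A t))) atTop (𝓝 0) := by
    simpa using ((hDbD.pow 2).mul hDA).const_mul (2 * c ^ 2)
  have hsum := ((((hsq hAbA').add (hsq hBbB)).add (hsq hCbC)).add (hsq hDbD)).add hDA'
  simp only [add_zero] at hsum
  refine hsum.congr' ?_
  filter_upwards [eventually_ge_atTop 0] with t ht
  obtain ⟨hAt, hBt, hCt, hDt⟩ := hg.pos ht
  unfold normSqDiff
  field_simp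
  ring

end IsA8Flow

theorem stmt_14_general (l1 l2 l3 l4 m1 m2 m3 m4 a b c : ℝ)
    (A B C D Ab Bb Cb Db : ℝ → ℝ)
    (hApos : ∀ t ∈ Set.Ici (0:ℝ), 0 < A t) (hBpos : ∀ t ∈ Set.Ici (0:ℝ), 0 < B t)
    (hCpos : ∀ t ∈ Set.Ici (0:ℝ), 0 < C t) (hDpos : ∀ t ∈ Set.Ici (0:ℝ), 0 < D t)
    (hAbpos : ∀ t ∈ Set.Ici (0:ℝ), 0 < Ab t) (hBbpos : ∀ t ∈ Set.Ici (0:ℝ), 0 < Bb t)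
    (hCbpos : ∀ t ∈ Set.Ici (0:ℝ), 0 < Cb t) (hDbpos : ∀ t ∈ Set.Ici (0:ℝ), 0 < Db t)
    (hA : ∀ t ∈ Set.Ici (0:ℝ),
      HasDerivWithinAt A (C t / B t + B t / C t - 2) (Set.Ici 0) t)
    (hB : ∀ t ∈ Set.Ici (0:ℝ),
      HasDerivWithinAt B (-(B t) ^ 2 / (A t * C t) + C t / A t + D t / C t) (Set.Ici 0) t)
    (hC : ∀ t ∈ Set.Ici (0:ℝ),
      HasDerivWithinAt C (-(C t) ^ 2 / (A t * B t) + B t / A t + D t / B t) (Set.Ici 0) t)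
    (hD : ∀ t ∈ Set.Ici (0:ℝ),
      HasDerivWithinAt D (-(D t) ^ 2 / (B t * C t)) (Set.Ici 0) t)
    (hA0 : A 0 = l1) (hB0 : B 0 = l2) (hC0 : C 0 = l3) (hD0 : D 0 = l4)
    (hBlim : Filter.Tendsto B Filter.atTop Filter.atTop)
    (hBClim : Filter.Tendsto (fun t => B t / C t) Filter.atTop (nhds 1))
    (hAb : ∀ t ∈ Set.Ici (0:ℝ),
      HasDerivWithinAt Ab (Cb t / Bb t + Bb t / Cb t - 2) (Set.Ici 0) t)
    (hBb : ∀ t ∈ Set.Ici (0:ℝ),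
      HasDerivWithinAt Bb (-(Bb t) ^ 2 / (Ab t * Cb t) + Cb t / Ab t + Db t / Cb t) (Set.Ici 0) t)
    (hCb : ∀ t ∈ Set.Ici (0:ℝ),
      HasDerivWithinAt Cb (-(Cb t) ^ 2 / (Ab t * Bb t) + Bb t / Ab t + Db t / Bb t) (Set.Ici 0) t)
    (hDb : ∀ t ∈ Set.Ici (0:ℝ),
      HasDerivWithinAt Db (-(Db t) ^ 2 / (Bb t * Cb t)) (Set.Ici 0) t)
    (hAb0 : Ab 0 = m1) (hBb0 : Bb 0 = m2) (hCb0 : Cb 0 = m3) (hDb0 : Db 0 = m4)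
    (hBbClim : Filter.Tendsto (fun t => Bb t / Cb t) Filter.atTop (nhds 1)) :
    Filter.Tendsto (fun t : ℝ =>
        ((A t - Ab t - a ^ 2 * Bb t - b ^ 2 * Cb t - c ^ 2 * Db t) / A t) ^ 2 +
        ((B t - Bb t - a ^ 2 * Db t) / B t) ^ 2 +
        ((C t - Cb t - b ^ 2 * Db t) / C t) ^ 2 +
        ((D t - Db t) / D t) ^ 2 +
        2 * (a * Bb t + a * c * Db t) ^ 2 / (A t * B t) +
        2 * (b * Cb t + b * c * Db t) ^ 2 / (A t * C t) +
        2 * (c * Db t) ^ 2 / (A t * D t) +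
        2 * (a * b * Db t) ^ 2 / (B t * C t) +
        2 * (a * Db t) ^ 2 / (B t * D t) +
        2 * (b * Db t) ^ 2 / (C t * D t))
      Filter.atTop (nhds 0) ↔
      (a = 0 ∧ b = 0 ∧ m2 * m3 * m4 ^ 2 = l2 * l3 * l4 ^ 2 ∧
       m1 * m4 * (m2 + m3) = l1 * l4 * (l2 + l3)) := by
  subst hA0 hB0 hC0 hD0 hAb0 hBb0 hCb0 hDb0
  have hg : IsA8Flow A B C D := ⟨hApos, hBpos, hCpos, hDpos, hA, hB, hC, hD⟩
  have hg' : IsA8Flow Ab Bb Cb Db := ⟨hAbpos, hBbpos, hCbpos, hDbpos, hAb, hBb, hCb, hDb⟩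
  change Tendsto (normSqDiff a b c A B C D Ab Bb Cb Db) atTop (𝓝 0) ↔ _
  constructor
  · intro h
    have hCB : Tendsto (fun t => C t / B t) atTop (𝓝 1) := by
      simpa using hBClim.inv₀ one_ne_zero
    obtain rfl := hg.eq_zero_of_tendsto_normSqDiff hg' hBlim hBClim h
    obtain rfl := hg.swap.eq_zero_of_tendsto_normSqDiff hg'.swap
      (tendsto_atTop_of_tendsto_div_one hBlim hBClim) hCB (by rwa [normSqDiff_swap])
    have hK := (hg.tendsto_div_D_one_iff hg').1 (hg.tendsto_div_D_of_tendsto_normSqDiff h)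
    exact ⟨rfl, rfl, hK, (hg.tendsto_div_A_one_iff hg' hBClim hBbClim hK).1
      (hg.tendsto_div_A_of_tendsto_normSqDiff hg' hBClim h)⟩
  · rintro ⟨rfl, rfl, hK, hL⟩
    exact hg.tendsto_normSqDiff_zero_of_eq hg' hBClim hBbClim c hK hL

/-- class A8, different frames: quasi-convergence holds iff
`a = 0`, `b = 0`, `λ̄₂λ̄₃λ̄₄² = λ₂λ₃λ₄²` and `λ̄₁λ̄₄(λ̄₂+λ̄₃) = λ₁λ₄(λ₂+λ₃)`;
`[g]` is a 2-parameter family. -/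
theorem stmt_14 (l1 l2 l3 l4 m1 m2 m3 m4 a b c : ℝ)
    (hl1 : 0 < l1) (hl2 : 0 < l2) (hl3 : 0 < l3) (hl4 : 0 < l4)
    (hm1 : 0 < m1) (hm2 : 0 < m2) (hm3 : 0 < m3) (hm4 : 0 < m4)
    (A B C D Ab Bb Cb Db : ℝ → ℝ)
    (hApos : ∀ t ∈ Set.Ici (0:ℝ), 0 < A t) (hBpos : ∀ t ∈ Set.Ici (0:ℝ), 0 < B t)
    (hCpos : ∀ t ∈ Set.Ici (0:ℝ), 0 < C t) (hDpos : ∀ t ∈ Set.Ici (0:ℝ), 0 < D t)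
    (hAbpos : ∀ t ∈ Set.Ici (0:ℝ), 0 < Ab t) (hBbpos : ∀ t ∈ Set.Ici (0:ℝ), 0 < Bb t)
    (hCbpos : ∀ t ∈ Set.Ici (0:ℝ), 0 < Cb t) (hDbpos : ∀ t ∈ Set.Ici (0:ℝ), 0 < Db t)
    (hA : ∀ t ∈ Set.Ici (0:ℝ),
      HasDerivWithinAt A (C t / B t + B t / C t - 2) (Set.Ici 0) t)
    (hB : ∀ t ∈ Set.Ici (0:ℝ),
      HasDerivWithinAt B (-(B t) ^ 2 / (A t * C t) + C t / A t + D t / C t) (Set.Ici 0) t)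
    (hC : ∀ t ∈ Set.Ici (0:ℝ),
      HasDerivWithinAt C (-(C t) ^ 2 / (A t * B t) + B t / A t + D t / B t) (Set.Ici 0) t)
    (hD : ∀ t ∈ Set.Ici (0:ℝ),
      HasDerivWithinAt D (-(D t) ^ 2 / (B t * C t)) (Set.Ici 0) t)
    (hA0 : A 0 = l1) (hB0 : B 0 = l2) (hC0 : C 0 = l3) (hD0 : D 0 = l4)
    (hBlim : Filter.Tendsto B Filter.atTop Filter.atTop)
    (hBClim : Filter.Tendsto (fun t => B t / C t) Filter.atTop (nhds 1))
    (hAb : ∀ t ∈ Set.Ici (0:ℝ),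
      HasDerivWithinAt Ab (Cb t / Bb t + Bb t / Cb t - 2) (Set.Ici 0) t)
    (hBb : ∀ t ∈ Set.Ici (0:ℝ),
      HasDerivWithinAt Bb (-(Bb t) ^ 2 / (Ab t * Cb t) + Cb t / Ab t + Db t / Cb t) (Set.Ici 0) t)
    (hCb : ∀ t ∈ Set.Ici (0:ℝ),
      HasDerivWithinAt Cb (-(Cb t) ^ 2 / (Ab t * Bb t) + Bb t / Ab t + Db t / Bb t) (Set.Ici 0) t)
    (hDb : ∀ t ∈ Set.Ici (0:ℝ),
      HasDerivWithinAt Db (-(Db t) ^ 2 / (Bb t * Cb t)) (Set.Ici 0) t)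
    (hAb0 : Ab 0 = m1) (hBb0 : Bb 0 = m2) (hCb0 : Cb 0 = m3) (hDb0 : Db 0 = m4)
    (hBblim : Filter.Tendsto Bb Filter.atTop Filter.atTop)
    (hBbClim : Filter.Tendsto (fun t => Bb t / Cb t) Filter.atTop (nhds 1)) :
    Filter.Tendsto (fun t : ℝ =>
        ((A t - Ab t - a ^ 2 * Bb t - b ^ 2 * Cb t - c ^ 2 * Db t) / A t) ^ 2 +
        ((B t - Bb t - a ^ 2 * Db t) / B t) ^ 2 +
        ((C t - Cb t - b ^ 2 * Db t) / C t) ^ 2 +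
        ((D t - Db t) / D t) ^ 2 +
        2 * (a * Bb t + a * c * Db t) ^ 2 / (A t * B t) +
        2 * (b * Cb t + b * c * Db t) ^ 2 / (A t * C t) +
        2 * (c * Db t) ^ 2 / (A t * D t) +
        2 * (a * b * Db t) ^ 2 / (B t * C t) +
        2 * (a * Db t) ^ 2 / (B t * D t) +
        2 * (b * Db t) ^ 2 / (C t * D t))
      Filter.atTop (nhds 0) ↔
      (a = 0 ∧ b = 0 ∧ m2 * m3 * m4 ^ 2 = l2 * l3 * l4 ^ 2 ∧
       m1 * m4 * (m2 + m3) = l1 * l4 * (l2 + l3)) :=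
  stmt_14_general l1 l2 l3 l4 m1 m2 m3 m4 a b c A B C D Ab Bb Cb Db hApos hBpos hCpos hDpos hAbpos
    hBbpos hCbpos hDbpos hA hB hC hD hA0 hB0 hC0 hD0 hBlim hBClim hAb hBb hCb hDb hAb0 hBb0 hCb0
    hDb0 hBbClim
end

section
/- Let a₃ ≠ 0 be real and let λ₁,λ₃,λ₄ and λ̄₁,λ̄₃,λ̄₄ be positive reals. Suppose A,C,D : [0,∞) → (0,∞) are differentiable and satisfy dA/dt = C/A + 2, dC/dt = -C²/A², dD/dt = 4a₃² with A(0)=λ₁, C(0)=λ₃, D(0)=λ₄, and suppose (as holds for these solutions) that C(t) converges to a positive limit c as t → ∞. Let Ā,C̄,D̄ satisfy the same ODE system with initial data λ̄₁,λ̄₃,λ̄₄ and C̄(t) → c̄ > 0. Then 2((A-Ā)/A)² + ((C-C̄)/C)² + ((D-D̄)/D)² tends to 0 as t → ∞ if and only if c̄ = c; in particular λ̄₁ and λ̄₄ may be chosen arbitrarily (with λ̄₃ then constrained only by the limit condition), so the quasi-convergence class [g]_α is exactly a 2-parameter family. -/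
/-!
The `D`-components are affine with the same slope `4 a₃² > 0`, and the `A`-components satisfy
`A 0 + 2t ≤ A t ≤ A 0 + 2t + (C 0 / 2) log ((A 0 + 2t) / A 0)` (since `C` decreases and
`A' - 2 = C / A ≤ C 0 / (A 0 + 2t)`), so both grow linearly with slopes independent of the initial
data. Hence the `A`- and `D`-terms of the distance tend to `0` for any two solutions, and the
distance tends to `((c - c̄) / c)²`, which vanishes iff `c̄ = c`.
-/

open Filter Set Real Topology Asymptotics

theorem le_of_hasDerivWithinAt_Ici {f g f' g' : ℝ → ℝ} {a : ℝ}
    (hf : ∀ t ∈ Ici a, HasDerivWithinAt f (f' t) (Ici a) t)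
    (hg : ∀ t ∈ Ici a, HasDerivWithinAt g (g' t) (Ici a) t)
    (ha : f a ≤ g a) (hfg : ∀ t ∈ Ici a, f' t ≤ g' t) :
    ∀ t ∈ Ici a, f t ≤ g t := by
  intro t ht
  have hcont {φ φ' : ℝ → ℝ} (hφ : ∀ t ∈ Ici a, HasDerivWithinAt φ (φ' t) (Ici a) t) :
      ContinuousOn φ (Icc a t) := fun x hx =>
    (hφ x hx.1).continuousWithinAt.mono Icc_subset_Ici_self
  have hright {φ φ' : ℝ → ℝ} (hφ : ∀ t ∈ Ici a, HasDerivWithinAt φ (φ' t) (Ici a) t) :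
      ∀ x ∈ Ico a t, HasDerivWithinAt φ (φ' x) (Ici x) x := fun x hx =>
    (hφ x hx.1).mono (Ici_subset_Ici.2 hx.1)
  exact image_le_of_deriv_right_le_deriv_boundary (hcont hf) (hright hf) ha (hcont hg)
    (hright hg) (fun x hx => hfg x hx.1) ⟨ht, le_rfl⟩

theorem eq_add_mul_of_hasDerivWithinAt_Ici {f : ℝ → ℝ} {a k : ℝ}
    (hf : ∀ t ∈ Ici a, HasDerivWithinAt f k (Ici a) t) :
    ∀ t ∈ Ici a, f t = f a + k * (t - a) := by
  have hline : ∀ t ∈ Ici a, HasDerivWithinAt (fun t => f a + k * (t - a)) k (Ici a) t :=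
    fun t _ => by simpa using (((hasDerivWithinAt_id t _).sub_const a).const_mul k).const_add (f a)
  intro t ht
  exact le_antisymm
    (le_of_hasDerivWithinAt_Ici hf hline (by simp) (fun _ _ => le_rfl) t ht)
    (le_of_hasDerivWithinAt_Ici hline hf (by simp) (fun _ _ => le_rfl) t ht)

theorem tendsto_div_id_of_hasDerivWithinAt_Ici {f : ℝ → ℝ} {a k : ℝ}
    (hf : ∀ t ∈ Ici a, HasDerivWithinAt f k (Ici a) t) :
    Tendsto (fun t => f t / t) atTop (𝓝 k) := by
  have hlim : Tendsto (fun t => k + (f a - k * a) / t) atTop (𝓝 k) := by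
    simpa using tendsto_const_nhds.add (tendsto_const_nhds.div_atTop (tendsto_id (α := ℝ)))
  refine hlim.congr' ?_
  filter_upwards [eventually_gt_atTop 0, eventually_ge_atTop a] with t ht hat
  rw [eq_add_mul_of_hasDerivWithinAt_Ici hf t hat]
  field_simp
  ring

theorem tendsto_log_add_mul_div_atTop {a b : ℝ} (hb : 0 < b) :
    Tendsto (fun t => log (a + b * t) / t) atTop (𝓝 0) := by
  have hlin : (fun t => a + b * t) =O[atTop] id :=
    (isLittleO_const_id_atTop a).isBigO.add ((isBigO_refl _ _).const_mul_left b)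
  exact ((isLittleO_log_id_atTop.comp_tendsto
    (tendsto_atTop_add_const_left _ a (tendsto_id.const_mul_atTop hb))).trans_isBigO
    hlin).tendsto_div_nhds_zero

theorem tendsto_sub_div_of_tendsto_div_id {f g : ℝ → ℝ} {k : ℝ} (hk : k ≠ 0)
    (hf : Tendsto (fun t => f t / t) atTop (𝓝 k)) (hg : Tendsto (fun t => g t / t) atTop (𝓝 k)) :
    Tendsto (fun t => (f t - g t) / f t) atTop (𝓝 0) := by
  have hlim : Tendsto (fun t => 1 - (g t / t) / (f t / t)) atTop (𝓝 0) := by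
    simpa [hk] using (tendsto_const_nhds (x := (1 : ℝ))).sub (hg.div hf hk)
  refine hlim.congr' ?_
  filter_upwards [eventually_gt_atTop 0, hf.eventually_ne hk] with t ht hft
  have hft : f t ≠ 0 := by rintro h; simp [h] at hft
  field_simp

namespace A9ii

variable {A C : ℝ → ℝ}
  (hApos : ∀ t ∈ Ici (0:ℝ), 0 < A t) (hCpos : ∀ t ∈ Ici (0:ℝ), 0 < C t)
  (hA : ∀ t ∈ Ici (0:ℝ), HasDerivWithinAt A (C t / A t + 2) (Ici 0) t)
  (hC : ∀ t ∈ Ici (0:ℝ), HasDerivWithinAt C (-(C t) ^ 2 / (A t) ^ 2) (Ici 0) t)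
include hApos hCpos hA

theorem add_two_mul_le : ∀ t ∈ Ici (0:ℝ), A 0 + 2 * t ≤ A t := by
  have hline : ∀ t ∈ Ici (0:ℝ), HasDerivWithinAt (fun t => A 0 + 2 * t) 2 (Ici 0) t :=
    fun t _ => by simpa using ((hasDerivWithinAt_id t _).const_mul 2).const_add (A 0)
  exact le_of_hasDerivWithinAt_Ici hline hA (by simp)
    (fun t ht => le_add_of_nonneg_left (div_pos (hCpos t ht) (hApos t ht)).le)

include hC

theorem le_add_two_mul_add_log :
    ∀ t ∈ Ici (0:ℝ), A t ≤ A 0 + 2 * t + C 0 / 2 * (log (A 0 + 2 * t) - log (A 0)) := by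
  have hA0 := hApos 0 self_mem_Ici
  have hC_le : ∀ t ∈ Ici (0:ℝ), C t ≤ C 0 :=
    le_of_hasDerivWithinAt_Ici hC (fun t _ => hasDerivWithinAt_const t _ (C 0)) le_rfl
      (fun t _ => div_nonpos_of_nonpos_of_nonneg (neg_nonpos.2 (sq_nonneg _)) (sq_nonneg _))
  have hbound : ∀ t ∈ Ici (0:ℝ), HasDerivWithinAt
      (fun t => A 0 + 2 * t + C 0 / 2 * (log (A 0 + 2 * t) - log (A 0)))
      (2 + C 0 / (A 0 + 2 * t)) (Ici 0) t := by
    intro t ht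
    have hpos : 0 < A 0 + 2 * t := by linarith [mem_Ici.1 ht]
    have hlin : HasDerivAt (fun t => A 0 + 2 * t) 2 t := by
      simpa using ((hasDerivAt_id t).const_mul 2).const_add (A 0)
    refine ((hlin.add (((hlin.log hpos.ne').sub_const (log (A 0))).const_mul (C 0 / 2))).congr_deriv
      ?_).hasDerivWithinAt
    field_simp
  refine le_of_hasDerivWithinAt_Ici hA hbound (by simp) fun t ht => ?_
  have hlow := add_two_mul_le hApos hCpos hA t ht
  have hpos : 0 < A 0 + 2 * t := by linarith [mem_Ici.1 ht]
  rw [add_comm]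
  gcongr
  · exact (hCpos 0 self_mem_Ici).le
  · exact hC_le t ht

theorem tendsto_div_id : Tendsto (fun t => A t / t) atTop (𝓝 2) := by
  have hlow : Tendsto (fun t => 2 + A 0 / t) atTop (𝓝 2) := by
    simpa using tendsto_const_nhds.add (tendsto_const_nhds.div_atTop (tendsto_id (α := ℝ)))
  have hup : Tendsto (fun t => 2 + (A 0 - C 0 / 2 * log (A 0)) / t
      + C 0 / 2 * (log (A 0 + 2 * t) / t)) atTop (𝓝 2) := by
    simpa using (tendsto_const_nhds.add (tendsto_const_nhds.div_atTop (tendsto_id (α := ℝ)))).add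
      ((tendsto_log_add_mul_div_atTop two_pos).const_mul (C 0 / 2))
  refine tendsto_of_tendsto_of_tendsto_of_le_of_le' hlow hup ?_ ?_ <;>
    filter_upwards [eventually_gt_atTop 0] with t ht
  · have := add_two_mul_le hApos hCpos hA t ht.le
    rw [le_div_iff₀ ht]
    field_simp
    linarith
  · have := le_add_two_mul_add_log hApos hCpos hA hC t ht.le
    rw [div_le_iff₀ ht]
    field_simp
    linarith

end A9ii

theorem stmt_15_general (a3 : ℝ) (ha3 : a3 ≠ 0)
    (A C D Ab Cb Db : ℝ → ℝ)
    (hApos : ∀ t ∈ Set.Ici (0:ℝ), 0 < A t) (hCpos : ∀ t ∈ Set.Ici (0:ℝ), 0 < C t)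
    (hAbpos : ∀ t ∈ Set.Ici (0:ℝ), 0 < Ab t) (hCbpos : ∀ t ∈ Set.Ici (0:ℝ), 0 < Cb t)
    (hA : ∀ t ∈ Set.Ici (0:ℝ), HasDerivWithinAt A (C t / A t + 2) (Set.Ici 0) t)
    (hC : ∀ t ∈ Set.Ici (0:ℝ),
      HasDerivWithinAt C (-(C t) ^ 2 / (A t) ^ 2) (Set.Ici 0) t)
    (hD : ∀ t ∈ Set.Ici (0:ℝ), HasDerivWithinAt D (4 * a3 ^ 2) (Set.Ici 0) t)
    (c : ℝ) (hc : 0 < c) (hClim : Filter.Tendsto C Filter.atTop (nhds c))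
    (hAb : ∀ t ∈ Set.Ici (0:ℝ), HasDerivWithinAt Ab (Cb t / Ab t + 2) (Set.Ici 0) t)
    (hCb : ∀ t ∈ Set.Ici (0:ℝ),
      HasDerivWithinAt Cb (-(Cb t) ^ 2 / (Ab t) ^ 2) (Set.Ici 0) t)
    (hDb : ∀ t ∈ Set.Ici (0:ℝ), HasDerivWithinAt Db (4 * a3 ^ 2) (Set.Ici 0) t)
    (cb : ℝ) (hCblim : Filter.Tendsto Cb Filter.atTop (nhds cb)) :
    Filter.Tendsto (fun t : ℝ =>
        2 * ((A t - Ab t) / A t) ^ 2 + ((C t - Cb t) / C t) ^ 2 +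
        ((D t - Db t) / D t) ^ 2)
      Filter.atTop (nhds 0) ↔ cb = c := by
  have hAterm := tendsto_sub_div_of_tendsto_div_id two_ne_zero
    (A9ii.tendsto_div_id hApos hCpos hA hC) (A9ii.tendsto_div_id hAbpos hCbpos hAb hCb)
  have hDterm := tendsto_sub_div_of_tendsto_div_id (by positivity)
    (tendsto_div_id_of_hasDerivWithinAt_Ici hD) (tendsto_div_id_of_hasDerivWithinAt_Ici hDb)
  have hCterm := (hClim.sub hCblim).div hClim hc.ne'
  have hlim : Tendsto (fun t : ℝ =>
      2 * ((A t - Ab t) / A t) ^ 2 + ((C t - Cb t) / C t) ^ 2 + ((D t - Db t) / D t) ^ 2)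
      atTop (𝓝 (((c - cb) / c) ^ 2)) := by
    simpa using (((hAterm.pow 2).const_mul 2).add (hCterm.pow 2)).add (hDterm.pow 2)
  constructor
  · intro h
    simpa [hc.ne', sub_eq_zero, eq_comm] using tendsto_nhds_unique hlim h
  · rintro rfl
    simpa using hlim

/-- class A9ii: for solutions of the reduced A9ii Ricci-flow ODE
system, quasi-convergence in the same frame holds iff the limits of `C` and `C̄`
agree; `[g]_α` is a 2-parameter family. -/
theorem stmt_15 (a3 : ℝ) (ha3 : a3 ≠ 0)
    (l1 l3 l4 m1 m3 m4 : ℝ)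
    (hl1 : 0 < l1) (hl3 : 0 < l3) (hl4 : 0 < l4)
    (hm1 : 0 < m1) (hm3 : 0 < m3) (hm4 : 0 < m4)
    (A C D Ab Cb Db : ℝ → ℝ)
    (hApos : ∀ t ∈ Set.Ici (0:ℝ), 0 < A t) (hCpos : ∀ t ∈ Set.Ici (0:ℝ), 0 < C t)
    (hDpos : ∀ t ∈ Set.Ici (0:ℝ), 0 < D t)
    (hAbpos : ∀ t ∈ Set.Ici (0:ℝ), 0 < Ab t) (hCbpos : ∀ t ∈ Set.Ici (0:ℝ), 0 < Cb t)
    (hDbpos : ∀ t ∈ Set.Ici (0:ℝ), 0 < Db t)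
    (hA : ∀ t ∈ Set.Ici (0:ℝ), HasDerivWithinAt A (C t / A t + 2) (Set.Ici 0) t)
    (hC : ∀ t ∈ Set.Ici (0:ℝ),
      HasDerivWithinAt C (-(C t) ^ 2 / (A t) ^ 2) (Set.Ici 0) t)
    (hD : ∀ t ∈ Set.Ici (0:ℝ), HasDerivWithinAt D (4 * a3 ^ 2) (Set.Ici 0) t)
    (hA0 : A 0 = l1) (hC0 : C 0 = l3) (hD0 : D 0 = l4)
    (c : ℝ) (hc : 0 < c) (hClim : Filter.Tendsto C Filter.atTop (nhds c))
    (hAb : ∀ t ∈ Set.Ici (0:ℝ), HasDerivWithinAt Ab (Cb t / Ab t + 2) (Set.Ici 0) t)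
    (hCb : ∀ t ∈ Set.Ici (0:ℝ),
      HasDerivWithinAt Cb (-(Cb t) ^ 2 / (Ab t) ^ 2) (Set.Ici 0) t)
    (hDb : ∀ t ∈ Set.Ici (0:ℝ), HasDerivWithinAt Db (4 * a3 ^ 2) (Set.Ici 0) t)
    (hAb0 : Ab 0 = m1) (hCb0 : Cb 0 = m3) (hDb0 : Db 0 = m4)
    (cb : ℝ) (hcb : 0 < cb) (hCblim : Filter.Tendsto Cb Filter.atTop (nhds cb)) :
    Filter.Tendsto (fun t : ℝ =>
        2 * ((A t - Ab t) / A t) ^ 2 + ((C t - Cb t) / C t) ^ 2 +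
        ((D t - Db t) / D t) ^ 2)
      Filter.atTop (nhds 0) ↔ cb = c :=
  stmt_15_general a3 ha3 A C D Ab Cb Db hApos hCpos hAbpos hCbpos hA hC hD c hc hClim hAb hCb hDb cb
    hCblim
end

section
/- Let λ₁,λ₂,λ₃,λ₄ be positive reals and set E₀ = λ₂/(λ₁λ₄), F₀ = λ₃/(λ₂λ₄). Then the functions A(t)=λ₁(3E₀t+1)^{1/3}, B(t)=λ₂(3E₀t+1)^{-1/3}(3F₀t+1)^{1/3}, C(t)=λ₃(3F₀t+1)^{-1/3}, D(t)=λ₄(3E₀t+1)^{1/3}(3F₀t+1)^{1/3} are positive and differentiable on [0,∞), take the values λ₁,λ₂,λ₃,λ₄ at t = 0, and satisfy the ODE system dA/dt = B/D, dB/dt = (AC - B²)/(AD), dC/dt = -C²/(BD), dD/dt = B/A + C/B for all t ≥ 0. -/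
/-!
With the cube roots `x = (3E₀t + 1)^{1/3}` and `y = (3F₀t + 1)^{1/3}` the proposed solution is
`A = λ₁x`, `B = λ₂y/x`, `C = λ₃/y`, `D = λ₄xy`, and `x' = E₀/x²`, `y' = F₀/y²`. Substituting
`E₀ = λ₂/(λ₁λ₄)` and `F₀ = λ₃/(λ₂λ₄)`, each equation of the system becomes a rational identity
in `x` and `y`.
-/

open Set

namespace Real

variable {x : ℝ}

lemma rpow_one_third_pow_three (hx : 0 ≤ x) : (x ^ ((1 : ℝ) / 3)) ^ 3 = x := by
  simpa using rpow_inv_natCast_pow hx (n := 3) (by norm_num)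

lemma rpow_neg_one_third (hx : 0 ≤ x) : x ^ (-(1 : ℝ) / 3) = (x ^ ((1 : ℝ) / 3))⁻¹ := by
  rw [neg_div, rpow_neg hx]

end Real

lemma HasDerivAt.rpow_one_third {f : ℝ → ℝ} {f' t : ℝ} (hf : HasDerivAt f f' t) (ht : 0 < f t) :
    HasDerivAt (fun s => f s ^ ((1 : ℝ) / 3)) (f' / (3 * (f t ^ ((1 : ℝ) / 3)) ^ 2)) t := by
  refine (hf.rpow_const (Or.inl ht.ne')).congr_deriv ?_
  have hcube := Real.rpow_one_third_pow_three ht.le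
  have hroot : 0 < f t ^ ((1 : ℝ) / 3) := Real.rpow_pos_of_pos ht _
  rw [Real.rpow_sub ht, Real.rpow_one]
  nth_rewrite 2 [← hcube]
  field_simp

lemma hasDerivAt_rpow_one_third_affine (c : ℝ) {t : ℝ} (ht : 0 < 3 * c * t + 1) :
    HasDerivAt (fun s => (3 * c * s + 1) ^ ((1 : ℝ) / 3))
      (c / ((3 * c * t + 1) ^ ((1 : ℝ) / 3)) ^ 2) t := by
  have hlin : HasDerivAt (fun s => 3 * c * s + 1) (3 * c) t := by
    simpa using ((hasDerivAt_id t).const_mul (3 * c)).add_const 1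
  refine (hlin.rpow_one_third ht).congr_deriv ?_
  field_simp

section CubeRootAnsatz

variable {l1 l2 l3 l4 : ℝ} {x y : ℝ → ℝ} {s : Set ℝ} {t : ℝ}

lemma hasDerivWithinAt_ansatz_A (hl1 : l1 ≠ 0) (hy0 : y t ≠ 0)
    (hx : HasDerivWithinAt x (l2 / (l1 * l4) / x t ^ 2) s t) :
    HasDerivWithinAt (fun r => l1 * x r) (l2 * y t / x t / (l4 * x t * y t)) s t := by
  refine (hx.const_mul l1).congr_deriv ?_
  field_simp

lemma hasDerivWithinAt_ansatz_B (hl1 : l1 ≠ 0) (hl2 : l2 ≠ 0) (hx0 : x t ≠ 0)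
    (hx : HasDerivWithinAt x (l2 / (l1 * l4) / x t ^ 2) s t)
    (hy : HasDerivWithinAt y (l3 / (l2 * l4) / y t ^ 2) s t) :
    HasDerivWithinAt (fun r => l2 * y r / x r)
      ((l1 * x t * (l3 / y t) - (l2 * y t / x t) ^ 2) / (l1 * x t * (l4 * x t * y t))) s t := by
  refine ((hy.const_mul l2).div hx hx0).congr_deriv ?_
  field_simp

lemma hasDerivWithinAt_ansatz_C (hx0 : x t ≠ 0) (hy0 : y t ≠ 0)
    (hy : HasDerivWithinAt y (l3 / (l2 * l4) / y t ^ 2) s t) :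
    HasDerivWithinAt (fun r => l3 / y r)
      (-(l3 / y t) ^ 2 / (l2 * y t / x t * (l4 * x t * y t))) s t := by
  refine ((hasDerivWithinAt_const t s l3).div hy hy0).congr_deriv ?_
  field_simp
  ring

lemma hasDerivWithinAt_ansatz_D (hl4 : l4 ≠ 0)
    (hx : HasDerivWithinAt x (l2 / (l1 * l4) / x t ^ 2) s t)
    (hy : HasDerivWithinAt y (l3 / (l2 * l4) / y t ^ 2) s t) :
    HasDerivWithinAt (fun r => l4 * x r * y r)
      (l2 * y t / x t / (l1 * x t) + l3 / y t / (l2 * y t / x t)) s t := by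
  refine ((hx.const_mul l4).mul hy).congr_deriv ?_
  field_simp

end CubeRootAnsatz

/-- class A6: the displayed explicit functions are positive,
take the prescribed initial values, and solve the A6 Ricci-flow ODE system on
`[0,∞)`. -/
theorem stmt_17 (l1 l2 l3 l4 : ℝ)
    (hl1 : 0 < l1) (hl2 : 0 < l2) (hl3 : 0 < l3) (hl4 : 0 < l4)
    (E0 F0 : ℝ) (hE0 : E0 = l2 / (l1 * l4)) (hF0 : F0 = l3 / (l2 * l4))
    (A B C D : ℝ → ℝ)
    (hA : ∀ t : ℝ, A t = l1 * (3 * E0 * t + 1) ^ ((1:ℝ)/3))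
    (hB : ∀ t : ℝ, B t = l2 * (3 * E0 * t + 1) ^ (-(1:ℝ)/3) * (3 * F0 * t + 1) ^ ((1:ℝ)/3))
    (hC : ∀ t : ℝ, C t = l3 * (3 * F0 * t + 1) ^ (-(1:ℝ)/3))
    (hD : ∀ t : ℝ, D t = l4 * (3 * E0 * t + 1) ^ ((1:ℝ)/3) * (3 * F0 * t + 1) ^ ((1:ℝ)/3)) :
    (∀ t ∈ Set.Ici (0:ℝ), 0 < A t ∧ 0 < B t ∧ 0 < C t ∧ 0 < D t) ∧
    A 0 = l1 ∧ B 0 = l2 ∧ C 0 = l3 ∧ D 0 = l4 ∧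
    (∀ t ∈ Set.Ici (0:ℝ),
      HasDerivWithinAt A (B t / D t) (Set.Ici 0) t ∧
      HasDerivWithinAt B ((A t * C t - (B t) ^ 2) / (A t * D t)) (Set.Ici 0) t ∧
      HasDerivWithinAt C (-(C t) ^ 2 / (B t * D t)) (Set.Ici 0) t ∧
      HasDerivWithinAt D (B t / A t + C t / B t) (Set.Ici 0) t) := by
  have hE : 0 < E0 := by rw [hE0]; positivity
  have hF : 0 < F0 := by rw [hF0]; positivity
  have hu : ∀ t ∈ Ici (0 : ℝ), 0 < 3 * E0 * t + 1 := fun t (ht : 0 ≤ t) => by positivity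
  have hv : ∀ t ∈ Ici (0 : ℝ), 0 < 3 * F0 * t + 1 := fun t (ht : 0 ≤ t) => by positivity
  set x : ℝ → ℝ := fun s => (3 * E0 * s + 1) ^ ((1 : ℝ) / 3)
  set y : ℝ → ℝ := fun s => (3 * F0 * s + 1) ^ ((1 : ℝ) / 3)
  have hAx : EqOn A (fun s => l1 * x s) (Ici 0) := fun s _ => hA s
  have hBxy : EqOn B (fun s => l2 * y s / x s) (Ici 0) := fun s hs => by
    rw [hB, Real.rpow_neg_one_third (hu s hs).le]; ring
  have hCy : EqOn C (fun s => l3 / y s) (Ici 0) := fun s hs => by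
    rw [hC, Real.rpow_neg_one_third (hv s hs).le]; ring
  have hDxy : EqOn D (fun s => l4 * x s * y s) (Ici 0) := fun s _ => hD s
  refine ⟨fun t (ht : 0 ≤ t) => ?_, by simp [hA], by simp [hB], by simp [hC], by simp [hD],
    fun t ht => ?_⟩
  · simp only [hA, hB, hC, hD]
    exact ⟨by positivity, by positivity, by positivity, by positivity⟩
  have hx0 : x t ≠ 0 := (Real.rpow_pos_of_pos (hu t ht) _).ne'
  have hy0 : y t ≠ 0 := (Real.rpow_pos_of_pos (hv t ht) _).ne'
  have hx : HasDerivWithinAt x (l2 / (l1 * l4) / x t ^ 2) (Ici 0) t :=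
    hE0 ▸ (hasDerivAt_rpow_one_third_affine E0 (hu t ht)).hasDerivWithinAt
  have hy : HasDerivWithinAt y (l3 / (l2 * l4) / y t ^ 2) (Ici 0) t :=
    hF0 ▸ (hasDerivAt_rpow_one_third_affine F0 (hv t ht)).hasDerivWithinAt
  rw [hAx ht, hBxy ht, hCy ht, hDxy ht]
  exact ⟨(hasDerivWithinAt_ansatz_A hl1.ne' hy0 hx).congr_of_mem hAx ht,
    (hasDerivWithinAt_ansatz_B hl1.ne' hl2.ne' hx0 hx hy).congr_of_mem hBxy ht,
    (hasDerivWithinAt_ansatz_C hx0 hy0 hy).congr_of_mem hCy ht,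
    (hasDerivWithinAt_ansatz_D hl4.ne' hx hy).congr_of_mem hDxy ht⟩
end
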